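/- (Lemma 1, second inclusion.) Suppose Assumption A1 holds for g, and suppose the base set D satisfies Z*_{t',s} ⊆ D for every t' ≥ s. Then for every t ≥ s and every integer h > 0, one has Z*_{t+h,s} ⊆ Z_{t+1,s}. -/

import Mathlib

/-- The functional cost of candidate change `s` at time `t`, evaluated at mean `μ`:
`f̃_{t,s}(μ) = F(s) + Σ_{i=s+1}^{t} (y i − μ)² + α − β·g(t−s)`. -/
noncomputable def ftilde (y F : ℕ → ℝ) (α β : ℝ) (g : ℕ → ℝ) (t s : ℕ) (μ : ℝ) : ℝ :=
  F s + ∑ i ∈ Finset.Icc (s + 1) t, (y i - μ) ^ 2 + α - β * g (t - s)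

/-- `I_{t,s,s'}`: the set of means on which change `s` beats change `s'` at time `t`. -/
def Iset (y F : ℕ → ℝ) (α β : ℝ) (g : ℕ → ℝ) (t s s' : ℕ) : Set ℝ :=
  {μ : ℝ | ftilde y F α β g t s μ ≤ ftilde y F α β g t s' μ}

/-- `I_{∞,s,s'}`: the limiting comparison set as `t → ∞`. -/
def Iinf (y F : ℕ → ℝ) (s s' : ℕ) : Set ℝ :=
  {μ : ℝ | F s - F s' + ∑ i ∈ Finset.Icc (s + 1) s', (y i - μ) ^ 2 ≤ 0}

/-- `Z*_{t,s}`: the exact living set of change `s` at time `t` (ties between equal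
costs are assigned to the older change). -/
noncomputable def Zstar (y F : ℕ → ℝ) (α β : ℝ) (g : ℕ → ℝ) (t s : ℕ) : Set ℝ :=
  {μ : ℝ | (∀ s'' : ℕ, s'' < s → ftilde y F α β g t s μ < ftilde y F α β g t s'' μ) ∧
           (∀ s' : ℕ, s < s' → s' ≤ t → ftilde y F α β g t s μ ≤ ftilde y F α β g t s' μ)}

/- Along every horizon the advantage of an older change `s` over a newer one `s'` changes only through
the penalty term `β (g (t - s') - g (t - s))`, which is nondecreasing in `t` under Assumption A1 and tends
to `0`. Hence a mean on which `s` is optimal at a late time `T` already beat every newer change at every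
earlier time (the `I_{t+1,s,s'}` conditions), and was never beaten by an older change in the limit
(the `I_{∞,s'',s}` conditions). Induction on `t` then keeps `Z*_{T,s}` inside `Z_{t,s}` for all
`T ≥ t`. -/

def AssumptionA1 (g : ℕ → ℝ) : Prop :=
  ∀ s s' : ℕ, s < s' →
    (∀ t₁ t₂ : ℕ, s' < t₁ → t₁ ≤ t₂ →
      g (t₁ - s') - g (t₁ - s) ≤ g (t₂ - s') - g (t₂ - s)) ∧
    Filter.Tendsto (fun t : ℕ => g (t - s') - g (t - s)) Filter.atTop (nhds 0)

theorem AssumptionA1.sub_nonpos {g : ℕ → ℝ} (hA1 : AssumptionA1 g) {s s' t : ℕ}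
    (hss' : s < s') (hs't : s' < t) : g (t - s') - g (t - s) ≤ 0 :=
  ge_of_tendsto (hA1 s s' hss').2 <| Filter.eventually_atTop.2
    ⟨t, fun _ htu => (hA1 s s' hss').1 t _ hs't htu⟩

section LivingSets

variable {y F : ℕ → ℝ} {α β : ℝ} {g : ℕ → ℝ}

theorem ftilde_sub_ftilde {s s' t : ℕ} (hss' : s ≤ s') (hs't : s' ≤ t) (μ : ℝ) :
    ftilde y F α β g t s μ - ftilde y F α β g t s' μ =
      F s - F s' + ∑ i ∈ Finset.Icc (s + 1) s', (y i - μ) ^ 2 - β * (g (t - s) - g (t - s')) := by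
  simp only [ftilde, Finset.Icc_add_one_left_eq_Ioc, ← Finset.sum_Ioc_consecutive _ hss' hs't]
  ring

theorem Zstar_subset_Iset (hβ : 0 ≤ β) (hA1 : AssumptionA1 g) {s s' t T : ℕ}
    (hss' : s < s') (hs't : s' < t) (htT : t ≤ T) :
    Zstar y F α β g T s ⊆ Iset y F α β g t s s' := by
  intro μ hμ
  have hbeat := sub_nonpos.2 (hμ.2 s' hss' (hs't.trans_le htT).le)
  have hpenalty := mul_le_mul_of_nonneg_left ((hA1 s s' hss').1 t T hs't htT) hβ
  rw [ftilde_sub_ftilde hss'.le (hs't.trans_le htT).le] at hbeat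
  rw [Iset, Set.mem_ofPred_eq, ← sub_nonpos, ftilde_sub_ftilde hss'.le hs't.le]
  linarith

theorem Zstar_disjoint_Iinf (hβ : 0 ≤ β) (hA1 : AssumptionA1 g) {s'' s T : ℕ}
    (hs''s : s'' < s) (hsT : s < T) :
    Disjoint (Zstar y F α β g T s) (Iinf y F s'' s) := by
  refine Set.disjoint_left.2 fun μ hμ hlim => ?_
  have hbeat := sub_neg.2 (hμ.1 s'' hs''s)
  have hpenalty := mul_nonpos_of_nonneg_of_nonpos hβ (hA1.sub_nonpos hs''s hsT)
  rw [← neg_sub, neg_lt_zero, ftilde_sub_ftilde hs''s.le hsT.le] at hbeat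
  rw [Iinf, Set.mem_ofPred_eq] at hlim
  linarith

theorem Zstar_subset_update (hβ : 0 ≤ β) (hA1 : AssumptionA1 g) {s t T : ℕ} (hst : s ≤ t)
    (htT : t < T) {W : Set ℝ} (hW : Zstar y F α β g T s ⊆ W) {Future Past : Set ℕ}
    (hFuture : Future ⊆ Set.Icc (s + 1) t) (hPast : Past ⊆ Set.Iio s) :
    Zstar y F α β g T s ⊆
      (W ∩ ⋂ s' ∈ Future, Iset y F α β g (t + 1) s s') \ ⋃ s'' ∈ Past, Iinf y F s'' s := by
  intro μ hμ
  refine ⟨⟨hW hμ, Set.mem_iInter₂.2 fun s' hs' => ?_⟩, ?_⟩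
  · exact Zstar_subset_Iset hβ hA1 (hFuture hs').1 (Nat.lt_succ_of_le (hFuture hs').2) htT hμ
  · simp only [Set.mem_iUnion₂, not_exists]
    exact fun s'' hs'' =>
      Set.disjoint_left.1 (Zstar_disjoint_Iinf hβ hA1 (hPast hs'') (hst.trans_lt htT)) hμ

end LivingSets

/-- Lemma 1, second inclusion: under Assumption A1, if the base set `D`
contains every exact living set `Z*_{t',s}` for `t' ≥ s`, then for any choice of the
families `Future_{t,s}` and `Past_s`, the recursively maintained set `Z_{t,s}` given by
`Z_{s,s} = D` and
`Z_{t+1,s} = (Z_{t,s} ∩ ⋂_{s' ∈ Future_{t,s}} I_{t+1,s,s'}) \ ⋃_{s'' ∈ Past_s} I_{∞,s'',s}`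
satisfies `Z*_{t+h,s} ⊆ Z_{t+1,s}` for all `t ≥ s` and every integer `h > 0`. -/
theorem Zstar_future_subset_Z_succ (y F : ℕ → ℝ) (α β : ℝ) (hβ : 0 ≤ β) (g : ℕ → ℝ)
    (hA1 : ∀ s s' : ℕ, s < s' →
      (∀ t₁ t₂ : ℕ, s' < t₁ → t₁ ≤ t₂ →
        g (t₁ - s') - g (t₁ - s) ≤ g (t₂ - s') - g (t₂ - s)) ∧
      Filter.Tendsto (fun t : ℕ => g (t - s') - g (t - s)) Filter.atTop (nhds 0))
    (s : ℕ) (D : Set ℝ) (hD : ∀ t' : ℕ, s ≤ t' → Zstar y F α β g t' s ⊆ D)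
    (Future : ℕ → Set ℕ) (hFuture : ∀ t : ℕ, s ≤ t → Future t ⊆ Set.Icc (s + 1) t)
    (Past : Set ℕ) (hPast : Past ⊆ Set.Iio s)
    (Z : ℕ → Set ℝ) (hZs : Z s = D)
    (hZrec : ∀ t : ℕ, s ≤ t →
      Z (t + 1) =
        (Z t ∩ ⋂ s' ∈ Future t, Iset y F α β g (t + 1) s s') \
          ⋃ s'' ∈ Past, Iinf y F s'' s) :
    ∀ t : ℕ, s ≤ t → ∀ h : ℕ, 0 < h → Zstar y F α β g (t + h) s ⊆ Z (t + 1) := by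
  have hZ : ∀ t, s ≤ t → ∀ T, t ≤ T → Zstar y F α β g T s ⊆ Z t := by
    intro t hst
    induction t, hst using Nat.le_induction with
    | base => exact fun T hsT => hZs ▸ hD T hsT
    | succ t hst ih =>
      intro T htT
      rw [hZrec t hst]
      exact Zstar_subset_update hβ hA1 hst htT (ih T (by omega)) (hFuture t hst) hPast
  exact fun t hst h hh => hZ (t + 1) (by omega) (t + h) (by omega)
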